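/- arXiv:1007.0653 — 3 statements merged into one kernel-verified Lean document; each statement's English description precedes it below -/
import Mathlib

section
/- There exists a constant C₁ > 0 such that for every ξ ∈ ℝ^d one has |H(ξ)| ≤ C₁ (1 + |ξ|) exp(C₁ |ξ|). -/
open MeasureTheory Real Set Filter
open scoped RealInnerProductSpace

noncomputable def Ham {d : ℕ} (g : ℝ → ℝ) (γ : ℝ → EuclideanSpace ℝ (Fin d))
    (ξ : EuclideanSpace ℝ (Fin d)) : ℝ :=
  ∫ z : ℝ, (Real.exp ⟪γ z, ξ⟫ - 1) * g z

lemma exp_sub_one_abs_le (t : ℝ) : |Real.exp t - 1| ≤ |t| * Real.exp |t| := by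
  rcases le_or_gt 0 t with h | h
  · rw [abs_of_nonneg h, abs_of_nonneg (by nlinarith [Real.add_one_le_exp t] : 0 ≤ Real.exp t - 1)]
    have h1 : (-t) + 1 ≤ Real.exp (-t) := Real.add_one_le_exp _
    have h2 : Real.exp (-t) * Real.exp t = 1 := by rw [← Real.exp_add]; simp
    nlinarith [Real.exp_pos t]
  · have h1 : t + 1 ≤ Real.exp t := Real.add_one_le_exp t
    have h2 : (1:ℝ) ≤ Real.exp (-t) := Real.one_le_exp (by linarith)
    rw [abs_of_neg h, abs_of_neg (by simpa using Real.exp_lt_one_iff.mpr h : Real.exp t - 1 < 0)]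
    nlinarith

/-- There exists C₁ > 0 such that for every ξ,
|H(ξ)| ≤ C₁ (1 + |ξ|) exp(C₁ |ξ|). -/
theorem stmt2
    {d : ℕ} (hd : 1 ≤ d) (α C : ℝ) (hα : α ∈ Set.Ioo (0:ℝ) 1) (hC : 0 < C)
    (g : ℝ → ℝ) (hg0 : ∀ z, 0 ≤ g z)
    (hgsm : ContDiffOn ℝ (⊤ : ℕ∞) g {(0:ℝ)}ᶜ)
    (hgsupp : Function.support g ⊆ Set.Icc (-1:ℝ) 1)
    (hgint : Integrable fun z : ℝ => min (z ^ 2) 1 * g z)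
    (hgnear : ∃ ε > 0, ∀ z : ℝ, z ≠ 0 → |z| < ε → g z = C / |z| ^ (1 + α))
    (γ : ℝ → EuclideanSpace ℝ (Fin d)) (hγ : ContDiff ℝ (⊤ : ℕ∞) γ)
    (hγbdd : ∀ k : ℕ, ∃ M : ℝ, ∀ z : ℝ, ‖iteratedDeriv k γ z‖ ≤ M)
    (hγ0 : γ 0 = 0)
    :
    ∃ C₁ > (0:ℝ), ∀ ξ : EuclideanSpace ℝ (Fin d),
      |Ham g γ ξ| ≤ C₁ * (1 + ‖ξ‖) * Real.exp (C₁ * ‖ξ‖) := by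
  obtain ⟨hα0, hα1⟩ := hα
  obtain ⟨ε, hε, hgε⟩ := hgnear
  obtain ⟨M₀, hM₀⟩ := hγbdd 0
  obtain ⟨M₁, hM₁⟩ := hγbdd 1
  simp only [iteratedDeriv_zero] at hM₀
  simp only [iteratedDeriv_one] at hM₁
  have hM₀0 : 0 ≤ M₀ := le_trans (norm_nonneg _) (hM₀ 0)
  have hM₁0 : 0 ≤ M₁ := le_trans (norm_nonneg _) (hM₁ 0)
  -- Lipschitz bound
  have hlip : ∀ z : ℝ, ‖γ z‖ ≤ M₁ * |z| := by
    intro z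
    have hL : LipschitzWith M₁.toNNReal γ := by
      apply lipschitzWith_of_nnnorm_deriv_le (hγ.differentiable (by simp))
      intro x
      have : ‖deriv γ x‖.toNNReal ≤ M₁.toNNReal := Real.toNNReal_mono (hM₁ x)
      rwa [norm_toNNReal] at this
    have h2 := hL.dist_le_mul z 0
    rw [hγ0] at h2
    simpa [dist_eq_norm, Real.dist_eq, Real.coe_toNNReal M₁ hM₁0] using h2
  -- a.e. nonzero
  have hne : ∀ᵐ z : ℝ, z ≠ (0:ℝ) := by
    rw [ae_iff]
    have : {z : ℝ | ¬ z ≠ 0} = {0} := by ext z; simp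
    rw [this]
    exact measure_singleton 0
  -- measurability of g
  have hgm : AEStronglyMeasurable g (volume : Measure ℝ) := by
    have hc : Continuous fun z : ℝ => min (z ^ 2) 1 := (continuous_pow 2).min continuous_const
    have hm : AEStronglyMeasurable
        (fun z : ℝ => (min (z ^ 2) 1 * g z) * (min (z ^ 2) 1)⁻¹) volume :=
      hgint.aestronglyMeasurable.mul (hc.measurable.inv.aestronglyMeasurable)
    refine hm.congr ?_
    filter_upwards [hne] with z hz
    have : (0:ℝ) < min (z ^ 2) 1 := lt_min (by positivity) one_pos
    field_simp
  -- the dominating function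
  set h : ℝ → ℝ := fun z => min (M₁ * |z|) M₀ * g z with hh_def
  have hh0 : ∀ z, 0 ≤ h z := fun z =>
    mul_nonneg (le_min (by positivity) hM₀0) (hg0 z)
  have hhm : AEStronglyMeasurable h (volume : Measure ℝ) :=
    (((continuous_const.mul continuous_abs).min continuous_const).aestronglyMeasurable).mul hgm
  -- integrability of |z|^(-α) near 0
  have habs : IntegrableOn (fun z : ℝ => |z| ^ (-α)) (Ioo (-ε) ε) volume := by
    have J : IntervalIntegrable (fun z : ℝ => |z| ^ (-α)) volume 0 ε := by
      have base : IntervalIntegrable (fun z : ℝ => z ^ (-α)) volume 0 ε :=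
        intervalIntegral.intervalIntegrable_rpow' (by linarith)
      rw [intervalIntegrable_iff, uIoc_of_le hε.le] at base ⊢
      exact base.congr_fun (fun x hx => by rw [abs_of_pos hx.1]) measurableSet_Ioc
    have J2 : IntervalIntegrable (fun z : ℝ => |z| ^ (-α)) volume (-ε) 0 := by
      have := (IntervalIntegrable.iff_comp_neg (f := fun z : ℝ => |z| ^ (-α)) (a := ε) (b := 0) (by simp)).mp J.symm
      simpa using this
    have J3 := J2.trans J
    rw [intervalIntegrable_iff, uIoc_of_le (by linarith : (-ε) ≤ ε)] at J3
    exact J3.mono_set Ioo_subset_Ioc_self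
  -- integrability of h near 0
  have hI1 : IntegrableOn h (Ioo (-ε) ε) volume := by
    refine Integrable.mono' (habs.const_mul (M₁ * C)) hhm.restrict ?_
    filter_upwards [ae_restrict_mem measurableSet_Ioo,
      hne.filter_mono (ae_mono Measure.restrict_le_self)] with z hz hz0
    have hzlt : |z| < ε := abs_lt.mpr ⟨hz.1, hz.2⟩
    have hzpos : (0:ℝ) < |z| := abs_pos.mpr hz0
    have hgz : g z = C / |z| ^ (1 + α) := hgε z hz0 hzlt
    have hrw : |z| ^ (-α) = |z| / |z| ^ (1 + α) := by
      rw [eq_div_iff (by positivity), ← Real.rpow_add hzpos]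
      have he : -α + (1 + α) = 1 := by ring
      rw [he, Real.rpow_one]
    have : ‖h z‖ = min (M₁ * |z|) M₀ * g z := abs_of_nonneg (hh0 z)
    rw [this, hgz]
    calc min (M₁ * |z|) M₀ * (C / |z| ^ (1 + α))
        ≤ (M₁ * |z|) * (C / |z| ^ (1 + α)) :=
          mul_le_mul_of_nonneg_right (min_le_left _ _) (by positivity)
      _ = M₁ * C * (|z| / |z| ^ (1 + α)) := by ring
      _ = M₁ * C * |z| ^ (-α) := by rw [hrw]
  -- integrability of h away from 0
  have hI2 : IntegrableOn h (Ioo (-ε) ε)ᶜ volume := by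
    have hmin : (0:ℝ) < min (ε ^ 2) 1 := lt_min (by positivity) one_pos
    refine Integrable.mono'
      (((hgint.const_mul (M₀ / min (ε ^ 2) 1)).restrict (s := (Ioo (-ε) ε)ᶜ)))
      hhm.restrict ?_
    filter_upwards [ae_restrict_mem measurableSet_Ioo.compl] with z hz
    have hzε : ε ≤ |z| := by
      simp only [mem_compl_iff, mem_Ioo, not_and_or, not_lt] at hz
      rcases hz with h1 | h1
      · rw [abs_of_nonpos (by linarith)]; linarith
      · rw [abs_of_nonneg (by linarith)]; linarith
    have h1 : min (ε ^ 2) 1 ≤ min (z ^ 2) 1 := by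
      apply min_le_min _ le_rfl
      calc ε ^ 2 ≤ |z| ^ 2 := by nlinarith
        _ = z ^ 2 := sq_abs z
    calc ‖h z‖ = min (M₁ * |z|) M₀ * g z := abs_of_nonneg (hh0 z)
      _ ≤ M₀ * g z := mul_le_mul_of_nonneg_right (min_le_right _ _) (hg0 z)
      _ ≤ M₀ / min (ε ^ 2) 1 * (min (z ^ 2) 1 * g z) := by
          rw [div_mul_eq_mul_div, le_div_iff₀ hmin]
          calc M₀ * g z * min (ε ^ 2) 1 ≤ M₀ * g z * min (z ^ 2) 1 :=
                mul_le_mul_of_nonneg_left h1 (mul_nonneg hM₀0 (hg0 z))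
            _ = M₀ * (min (z ^ 2) 1 * g z) := by ring
  have hhint : Integrable h volume := by
    have := hI1.union hI2
    rwa [union_compl_self, integrableOn_univ] at this
  set K : ℝ := ∫ z, h z with hK_def
  have hK0 : 0 ≤ K := integral_nonneg hh0
  refine ⟨K + M₀ + 1, by positivity, fun ξ => ?_⟩
  set C₁ : ℝ := K + M₀ + 1 with hC₁_def
  -- the pointwise bound
  have hbound : ∀ z : ℝ, ‖(Real.exp ⟪γ z, ξ⟫ - 1) * g z‖ ≤
      (‖ξ‖ * Real.exp (M₀ * ‖ξ‖)) * h z := by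
    intro z
    set t : ℝ := ⟪γ z, ξ⟫ with ht_def
    have hγle : ‖γ z‖ ≤ min (M₁ * |z|) M₀ := le_min (hlip z) (hM₀ z)
    have ht : |t| ≤ min (M₁ * |z|) M₀ * ‖ξ‖ :=
      (abs_real_inner_le_norm _ _).trans (mul_le_mul_of_nonneg_right hγle (norm_nonneg ξ))
    have ht2 : |t| ≤ M₀ * ‖ξ‖ :=
      ht.trans (mul_le_mul_of_nonneg_right (min_le_right _ _) (norm_nonneg ξ))
    calc ‖(Real.exp t - 1) * g z‖ = |Real.exp t - 1| * g z := by
          rw [norm_mul, Real.norm_eq_abs, Real.norm_eq_abs, abs_of_nonneg (hg0 z)]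
      _ ≤ (|t| * Real.exp |t|) * g z :=
          mul_le_mul_of_nonneg_right (exp_sub_one_abs_le t) (hg0 z)
      _ ≤ ((min (M₁ * |z|) M₀ * ‖ξ‖) * Real.exp (M₀ * ‖ξ‖)) * g z := by
          refine mul_le_mul_of_nonneg_right ?_ (hg0 z)
          exact mul_le_mul ht (Real.exp_le_exp.mpr ht2) (Real.exp_pos _).le
            (le_trans (abs_nonneg t) ht)
      _ = (‖ξ‖ * Real.exp (M₀ * ‖ξ‖)) * h z := by rw [hh_def]; ring
  have hGint : Integrable (fun z => (‖ξ‖ * Real.exp (M₀ * ‖ξ‖)) * h z) volume :=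
    hhint.const_mul _
  have hmain : |Ham g γ ξ| ≤ (‖ξ‖ * Real.exp (M₀ * ‖ξ‖)) * K := by
    rw [← Real.norm_eq_abs]
    calc ‖Ham g γ ξ‖ ≤ ∫ z, (‖ξ‖ * Real.exp (M₀ * ‖ξ‖)) * h z :=
        norm_integral_le_of_norm_le hGint (Eventually.of_forall hbound)
      _ = (‖ξ‖ * Real.exp (M₀ * ‖ξ‖)) * K := integral_const_mul _ _
  refine hmain.trans ?_
  have e1 : ‖ξ‖ ≤ 1 + ‖ξ‖ := by linarith [norm_nonneg ξ]
  have e2 : Real.exp (M₀ * ‖ξ‖) ≤ Real.exp (C₁ * ‖ξ‖) :=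
    Real.exp_le_exp.mpr (mul_le_mul_of_nonneg_right (by simp [hC₁_def]; linarith) (norm_nonneg ξ))
  have e3 : K ≤ C₁ := by simp [hC₁_def]; linarith
  calc (‖ξ‖ * Real.exp (M₀ * ‖ξ‖)) * K = K * ‖ξ‖ * Real.exp (M₀ * ‖ξ‖) := by ring
    _ ≤ C₁ * (1 + ‖ξ‖) * Real.exp (C₁ * ‖ξ‖) := by
        apply mul_le_mul _ e2 (Real.exp_pos _).le (by positivity)
        exact mul_le_mul e3 e1 (norm_nonneg ξ) (by positivity)
end

section
/- There exist constants c₂ > 0 and R₁ ≥ e such that L(a) ≥ c₂ |a| log|a| for all a ∈ ℝ^d with |a| ≥ R₁. -/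
open MeasureTheory Real Set Filter
open scoped RealInnerProductSpace

/-- The Legendre transform of the Hamiltonian, with values in `(-∞, +∞]` (as `EReal`). -/
noncomputable def LegE {d : ℕ} (g : ℝ → ℝ) (γ : ℝ → EuclideanSpace ℝ (Fin d))
    (a : EuclideanSpace ℝ (Fin d)) : EReal :=
  ⨆ ξ : EuclideanSpace ℝ (Fin d), ((⟪a, ξ⟫ - Ham g γ ξ : ℝ) : EReal)

lemma abs_exp_sub_one_le' (x : ℝ) : |Real.exp x - 1| ≤ |x| * Real.exp |x| := by
  rcases le_or_gt 0 x with h | h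
  · rw [abs_of_nonneg h, abs_of_nonneg (by nlinarith [Real.one_le_exp h] : (0:ℝ) ≤ Real.exp x - 1)]
    have h2 := mul_le_mul_of_nonneg_right (Real.add_one_le_exp (-x)) (Real.exp_pos x).le
    rw [Real.exp_neg, inv_mul_cancel₀ (Real.exp_ne_zero x)] at h2
    nlinarith
  · rw [abs_of_neg h]
    have h1 : Real.exp x - 1 ≤ 0 := by nlinarith [Real.exp_lt_one_iff.2 h]
    rw [abs_of_nonpos h1]
    nlinarith [Real.add_one_le_exp x, Real.one_le_exp (le_of_lt (neg_pos.2 h)), h.le]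

lemma aux_integrable {α C : ℝ} (hα : α ∈ Set.Ioo (0:ℝ) 1) (hC : 0 < C)
    {g : ℝ → ℝ} (hg0 : ∀ z, 0 ≤ g z) (hgc : ContinuousOn g {(0:ℝ)}ᶜ)
    (hgsupp : Function.support g ⊆ Set.Icc (-1:ℝ) 1)
    {ε : ℝ} (hε : 0 < ε) (hε1 : ε ≤ 1)
    (hgn : ∀ z : ℝ, z ≠ 0 → |z| < ε → g z = C / |z| ^ (1 + α)) :
    Integrable (fun z : ℝ => |z| * g z) := by
  have hgmeas : AEStronglyMeasurable g (volume : Measure ℝ) := by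
    have := hgc.aestronglyMeasurable (μ := volume) (measurableSet_singleton (0:ℝ)).compl
    rwa [MeasureTheory.restrict_compl_singleton] at this
  have hφmeas : AEStronglyMeasurable (fun z : ℝ => |z| * g z) volume :=
    (continuous_abs.aestronglyMeasurable).mul hgmeas
  have hrα : (-1:ℝ) < -α := by linarith [hα.2]
  have hpow : IntegrableOn (fun z : ℝ => C * z ^ (-α)) (Set.Ioc 0 ε) := by
    have := (intervalIntegral.intervalIntegrable_rpow' (a := 0) (b := ε) hrα)
    rw [intervalIntegrable_iff, Set.uIoc_of_le hε.le] at this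
    exact this.const_mul C
  have key : ∀ z : ℝ, 0 < z → z < ε → |z| * g z = C * z ^ (-α) := by
    intro z hz0 hzε
    have habs : |z| = z := abs_of_pos hz0
    have hg : g z = C / z ^ (1 + α) := by rw [hgn z hz0.ne' (by rwa [habs]), habs]
    rw [hg, habs, Real.rpow_add hz0, Real.rpow_one, Real.rpow_neg hz0.le]
    have hzα : z ^ α ≠ 0 := (Real.rpow_pos_of_pos hz0 α).ne'
    field_simp
  have hIoo : IntegrableOn (fun z : ℝ => |z| * g z) (Set.Ioo 0 ε) := by
    refine (hpow.mono_set Set.Ioo_subset_Ioc_self).congr_fun ?_ measurableSet_Ioo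
    intro z hz; exact (key z hz.1 hz.2).symm
  have hIooNeg : IntegrableOn (fun z : ℝ => |z| * g z) (Set.Ioo (-ε) 0) := by
    rw [← (Measure.measurePreserving_neg (volume : Measure ℝ)).integrableOn_comp_preimage
      (Homeomorph.neg ℝ).measurableEmbedding]
    have hpre : (Neg.neg ⁻¹' Set.Ioo (-ε) (0:ℝ) : Set ℝ) = Set.Ioo 0 ε := by
      ext x
      simp only [Set.mem_preimage, Set.mem_Ioo]
      constructor
      · rintro ⟨h1, h2⟩; constructor <;> linarith
      · rintro ⟨h1, h2⟩; constructor <;> linarith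
    rw [hpre]
    refine (hpow.mono_set Set.Ioo_subset_Ioc_self).congr_fun ?_ measurableSet_Ioo
    intro z hz
    show C * z ^ (-α) = |(-z)| * g (-z)
    have habs : |(-z)| = z := by rw [abs_neg, abs_of_pos hz.1]
    have hg : g (-z) = C / z ^ (1 + α) := by
      rw [hgn (-z) (by simpa using hz.1.ne') (by rw [habs]; exact hz.2), habs]
    have hzα : z ^ α ≠ 0 := (Real.rpow_pos_of_pos hz.1 α).ne'
    rw [hg, habs, Real.rpow_add hz.1, Real.rpow_one, Real.rpow_neg hz.1.le,
      mul_div_assoc', mul_div_mul_left C _ hz.1.ne', div_eq_mul_inv]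
  obtain ⟨B, hB⟩ : ∃ B, ∀ x ∈ Set.Icc (-1:ℝ) 1 ∩ {z | ε ≤ |z|}, ‖g x‖ ≤ B := by
    have hcpt : IsCompact (Set.Icc (-1:ℝ) 1 ∩ {z | ε ≤ |z|}) := by
      refine isCompact_Icc.of_isClosed_subset ?_ Set.inter_subset_left
      exact isClosed_Icc.inter (isClosed_le continuous_const continuous_abs)
    refine hcpt.exists_bound_of_continuousOn (hgc.mono ?_)
    intro x hx
    simp only [Set.mem_compl_iff, Set.mem_singleton_iff]
    intro hx0
    have := hx.2
    rw [hx0] at this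
    simp only [abs_zero, Set.mem_setOf_eq] at this
    linarith
  have hOut : IntegrableOn (fun z : ℝ => |z| * g z) ((Set.Ioo (-ε) ε)ᶜ) := by
    have hGint : Integrable ((Set.Icc (-1:ℝ) 1).indicator (fun _ => max B 0)) := by
      rw [integrable_indicator_iff measurableSet_Icc]
      exact integrableOn_const measure_Icc_lt_top.ne
    refine Integrable.mono' (hGint.restrict) (hφmeas.restrict) ?_
    filter_upwards [ae_restrict_mem measurableSet_Ioo.compl] with z hz
    by_cases hzsupp : g z = 0
    · simp only [hzsupp, mul_zero, norm_zero, Set.indicator_apply]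
      split
      · exact le_max_right B 0
      · exact le_rfl
    · have hzIcc : z ∈ Set.Icc (-1:ℝ) 1 := hgsupp hzsupp
      have hzε : ε ≤ |z| := by
        by_contra h
        push_neg at h
        exact hz (abs_lt.1 h)
      have hb := hB z ⟨hzIcc, hzε⟩
      rw [Set.indicator_of_mem hzIcc]
      have h1 : |z| ≤ 1 := abs_le.2 ⟨hzIcc.1, hzIcc.2⟩
      have hnn : ‖|z| * g z‖ = |z| * g z := by
        rw [Real.norm_eq_abs, abs_of_nonneg (mul_nonneg (abs_nonneg z) (hg0 z))]
      rw [hnn]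
      calc |z| * g z ≤ 1 * g z := mul_le_mul_of_nonneg_right h1 (hg0 z)
        _ = g z := one_mul _
        _ ≤ B := by rwa [Real.norm_eq_abs, abs_of_nonneg (hg0 z)] at hb
        _ ≤ max B 0 := le_max_left B 0
  rw [← integrableOn_univ]
  have hcover : (Set.univ : Set ℝ) ⊆ Set.Ioo (-ε) 0 ∪ ({0} ∪ (Set.Ioo 0 ε ∪ (Set.Ioo (-ε) ε)ᶜ)) := by
    intro x _
    rcases lt_trichotomy x 0 with h | h | h
    · by_cases h2 : -ε < x
      · exact Or.inl ⟨h2, h⟩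
      · exact Or.inr (Or.inr (Or.inr (fun hx => h2 hx.1)))
    · exact Or.inr (Or.inl (by simp [h]))
    · by_cases h2 : x < ε
      · exact Or.inr (Or.inr (Or.inl ⟨h, h2⟩))
      · exact Or.inr (Or.inr (Or.inr (fun hx => h2 hx.2)))
  have hsing : IntegrableOn (fun z : ℝ => |z| * g z) ({0} : Set ℝ) :=
    (integrableOn_singleton_iff (by simp)).2 (Or.inr (by simp))
  exact IntegrableOn.mono_set (hIooNeg.union (hsing.union (hIoo.union hOut))) hcover

/-- There exist c₂ > 0 and R₁ ≥ e such that
L(a) ≥ c₂ |a| log|a| whenever |a| ≥ R₁ (L taking values in (−∞, +∞]). -/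
theorem stmt5
    {d : ℕ} (hd : 1 ≤ d) (α C : ℝ) (hα : α ∈ Set.Ioo (0:ℝ) 1) (hC : 0 < C)
    (g : ℝ → ℝ) (hg0 : ∀ z, 0 ≤ g z)
    (hgsm : ContDiffOn ℝ (⊤ : ℕ∞) g {(0:ℝ)}ᶜ)
    (hgsupp : Function.support g ⊆ Set.Icc (-1:ℝ) 1)
    (hgint : Integrable fun z : ℝ => min (z ^ 2) 1 * g z)
    (hgnear : ∃ ε > 0, ∀ z : ℝ, z ≠ 0 → |z| < ε → g z = C / |z| ^ (1 + α))
    (γ : ℝ → EuclideanSpace ℝ (Fin d)) (hγ : ContDiff ℝ (⊤ : ℕ∞) γ)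
    (hγbdd : ∀ k : ℕ, ∃ M : ℝ, ∀ z : ℝ, ‖iteratedDeriv k γ z‖ ≤ M)
    (hγ0 : γ 0 = 0)
    :
    ∃ c₂ > (0:ℝ), ∃ R₁ : ℝ, Real.exp 1 ≤ R₁ ∧
      ∀ a : EuclideanSpace ℝ (Fin d), R₁ ≤ ‖a‖ →
        ((c₂ * ‖a‖ * Real.log ‖a‖ : ℝ) : EReal) ≤ LegE g γ a := by
  obtain ⟨ε₀, hε₀, hgn₀⟩ := hgnear
  have hε : 0 < min ε₀ 1 := lt_min hε₀ one_pos
  have hε1 : min ε₀ 1 ≤ 1 := min_le_right _ _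
  have hgn : ∀ z : ℝ, z ≠ 0 → |z| < min ε₀ 1 → g z = C / |z| ^ (1 + α) :=
    fun z hz h => hgn₀ z hz (lt_of_lt_of_le h (min_le_left _ _))
  have hφint : Integrable (fun z : ℝ => |z| * g z) :=
    aux_integrable hα hC hg0 hgsm.continuousOn hgsupp hε hε1 hgn
  obtain ⟨M, hM⟩ := hγbdd 1
  have hK : (0:ℝ) < max M 1 := lt_of_lt_of_le one_pos (le_max_right _ _)
  set K := max M 1 with hKdef
  -- Lipschitz bound on γ
  have hγlip : LipschitzWith (Real.toNNReal K) γ := by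
    apply lipschitzWith_of_nnnorm_deriv_le (hγ.differentiable (by simp))
    intro x
    rw [← NNReal.coe_le_coe, coe_nnnorm, Real.coe_toNNReal _ hK.le]
    calc ‖deriv γ x‖ = ‖iteratedDeriv 1 γ x‖ := by rw [iteratedDeriv_one]
      _ ≤ M := hM x
      _ ≤ K := le_max_left _ _
  have hγle : ∀ z : ℝ, ‖γ z‖ ≤ K * |z| := by
    intro z
    have h := hγlip.dist_le_mul z 0
    rwa [hγ0, dist_zero_right, Real.dist_0_eq_abs, Real.coe_toNNReal _ hK.le] at h
  set I := ∫ z : ℝ, |z| * g z with hIdef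
  have hI0 : 0 ≤ I := integral_nonneg (fun z => mul_nonneg (abs_nonneg z) (hg0 z))
  -- upper bound for the Hamiltonian
  have hHam : ∀ ξ : EuclideanSpace ℝ (Fin d),
      Ham g γ ξ ≤ K * ‖ξ‖ * Real.exp (K * ‖ξ‖) * I := by
    intro ξ
    set t := ‖ξ‖ with htdef
    have ht0 : 0 ≤ t := norm_nonneg ξ
    have hbound : ∀ z : ℝ, ‖(Real.exp ⟪γ z, ξ⟫ - 1) * g z‖ ≤
        (K * t * Real.exp (K * t)) * (|z| * g z) := by
      intro z
      by_cases hz : g z = 0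
      · simp only [hz, mul_zero, norm_zero]
        exact le_refl _
      · have hzIcc := hgsupp hz
        have hz1 : |z| ≤ 1 := abs_le.2 ⟨hzIcc.1, hzIcc.2⟩
        have hx : |⟪γ z, ξ⟫| ≤ K * |z| * t := by
          calc |⟪γ z, ξ⟫| ≤ ‖γ z‖ * ‖ξ‖ := abs_real_inner_le_norm _ _
            _ ≤ (K * |z|) * t := mul_le_mul_of_nonneg_right (hγle z) ht0
        have h1 : ‖(Real.exp ⟪γ z, ξ⟫ - 1) * g z‖ = |Real.exp ⟪γ z, ξ⟫ - 1| * g z := by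
          rw [Real.norm_eq_abs, abs_mul, abs_of_nonneg (hg0 z)]
        rw [h1]
        have h2 : |Real.exp ⟪γ z, ξ⟫ - 1| ≤ (K * t) * |z| * Real.exp (K * t) := by
          calc |Real.exp ⟪γ z, ξ⟫ - 1| ≤ |⟪γ z, ξ⟫| * Real.exp |⟪γ z, ξ⟫| :=
                abs_exp_sub_one_le' _
            _ ≤ (K * |z| * t) * Real.exp (K * |z| * t) := by
                apply mul_le_mul hx (Real.exp_le_exp.2 hx) (Real.exp_pos _).le
                positivity
            _ ≤ (K * t) * |z| * Real.exp (K * t) := by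
                have hle : K * |z| * t ≤ K * t := by
                  nlinarith [mul_nonneg (mul_nonneg hK.le ht0) (sub_nonneg.2 hz1)]
                have hexp : Real.exp (K * |z| * t) ≤ Real.exp (K * t) := Real.exp_le_exp.2 hle
                have h3 := mul_le_mul_of_nonneg_left hexp
                  (show (0:ℝ) ≤ K * |z| * t by positivity)
                calc K * |z| * t * Real.exp (K * |z| * t)
                    ≤ K * |z| * t * Real.exp (K * t) := h3
                  _ = K * t * |z| * Real.exp (K * t) := by ring
        calc |Real.exp ⟪γ z, ξ⟫ - 1| * g z ≤ ((K * t) * |z| * Real.exp (K * t)) * g z :=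
              mul_le_mul_of_nonneg_right h2 (hg0 z)
          _ = (K * t * Real.exp (K * t)) * (|z| * g z) := by ring
    have hGint : Integrable (fun z : ℝ => (K * t * Real.exp (K * t)) * (|z| * g z)) :=
      hφint.const_mul _
    have hnorm := norm_integral_le_of_norm_le hGint (Filter.Eventually.of_forall hbound)
    calc Ham g γ ξ ≤ ‖∫ z : ℝ, (Real.exp ⟪γ z, ξ⟫ - 1) * g z‖ := le_abs_self _
      _ ≤ ∫ z : ℝ, (K * t * Real.exp (K * t)) * (|z| * g z) := hnorm
      _ = K * t * Real.exp (K * t) * I := by rw [integral_const_mul]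
  -- choose constants
  refine ⟨1 / (4 * K), by positivity, max (Real.exp 1) ((2 * K * I) ^ 2 + 1),
    le_max_left _ _, ?_⟩
  intro a ha
  have hae : Real.exp 1 ≤ ‖a‖ := le_trans (le_max_left _ _) ha
  have ha0 : (0:ℝ) < ‖a‖ := lt_of_lt_of_le (Real.exp_pos 1) hae
  have hlog : 1 ≤ Real.log ‖a‖ := by
    have := Real.log_le_log (Real.exp_pos 1) hae
    rwa [Real.log_exp] at this
  set L := Real.log ‖a‖ with hLdef
  have hL0 : 0 < L := lt_of_lt_of_le one_pos hlog
  set t := L / (2 * K) with htdef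
  have ht0 : 0 < t := by positivity
  set ξ := (t / ‖a‖) • a with hξdef
  have hinner : ⟪a, ξ⟫ = t * ‖a‖ := by
    rw [hξdef, real_inner_smul_right, real_inner_self_eq_norm_mul_norm]
    field_simp
  have hnξ : ‖ξ‖ = t := by
    rw [hξdef, norm_smul, Real.norm_eq_abs, abs_of_nonneg (div_nonneg ht0.le ha0.le)]
    field_simp
  have hKt : K * t = L / 2 := by
    rw [htdef]
    field_simp
  have hexpKt : Real.exp (K * t) = Real.sqrt ‖a‖ := by
    rw [hKt, Real.sqrt_eq_rpow, Real.rpow_def_of_pos ha0, hLdef]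
    ring_nf
  set S := Real.sqrt ‖a‖ with hSdef
  have hS0 : 0 ≤ S := Real.sqrt_nonneg _
  have hS2 : S * S = ‖a‖ := Real.mul_self_sqrt ha0.le
  have hSge : 2 * K * I ≤ S := by
    have h1 : (2 * K * I) ^ 2 + 1 ≤ ‖a‖ := le_trans (le_max_right _ _) ha
    calc 2 * K * I ≤ |2 * K * I| := le_abs_self _
      _ = Real.sqrt ((2 * K * I) ^ 2) := (Real.sqrt_sq_eq_abs _).symm
      _ ≤ S := Real.sqrt_le_sqrt (by linarith)
  have hHa := hHam ξ
  rw [hnξ, hexpKt, hKt] at hHa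
  -- the key real inequality
  have key : (L / 2) * S * I ≤ ‖a‖ * L / (4 * K) := by
    have h0 : L / 2 * S * I = L * S * I / 2 := by ring
    rw [h0, div_le_div_iff₀ (by norm_num : (0:ℝ) < 2) (by positivity : (0:ℝ) < 4 * K), ← hS2]
    have h1 := mul_le_mul_of_nonneg_left hSge (show (0:ℝ) ≤ 2 * L * S by positivity)
    nlinarith [h1]
  have htN : t * ‖a‖ = 2 * (‖a‖ * L / (4 * K)) := by
    rw [htdef]
    field_simp
    ring
  have hreal : 1 / (4 * K) * ‖a‖ * L ≤ ⟪a, ξ⟫ - Ham g γ ξ := by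
    rw [hinner]
    have hc2 : 1 / (4 * K) * ‖a‖ * L = ‖a‖ * L / (4 * K) := by ring
    rw [hc2]
    linarith [hHa, key, htN]
  calc ((1 / (4 * K) * ‖a‖ * Real.log ‖a‖ : ℝ) : EReal)
      ≤ ((⟪a, ξ⟫ - Ham g γ ξ : ℝ) : EReal) := EReal.coe_le_coe_iff.2 hreal
    _ ≤ LegE g γ a :=
        le_iSup (fun ξ' : EuclideanSpace ℝ (Fin d) => ((⟪a, ξ'⟫ - Ham g γ ξ' : ℝ) : EReal)) ξ
end

section
/- Uniform Tauberian theorem: let F be a family of smooth functions f : ℝ → ℝ with f(0) = 0 such that (i) for every k ≥ 0, sup_{f ∈ F, z ∈ ℝ} |f^{(k)}(z)| < ∞, and (ii) there exist an integer K and a constant c₀ > 0 with inf_{f ∈ F} max_{1 ≤ k ≤ K} |f^{(k)}(0)| ≥ c₀ > 0. Let g : ℝ → [0,∞) satisfy ∫_ℝ (z² ∧ 1) g(z) dz < ∞ and liminf_{z → 0} |z|^{1+α} g(z) > 0 for some α ∈ (0,2). Define τ_f(β) = ∫_ℝ (exp(−β |f(z)|) − 1) g(z) dz for β > 0. Then there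 exists α₁ > 0 (depending only on the constants in (i), (ii) and on g) such that limsup_{β → ∞} sup_{f ∈ F} τ_f(β)/β^{α₁} < 0. -/
open MeasureTheory Real Set Filter


private lemma mono_aux {h h' : ℝ → ℝ} (hd : ∀ x, HasDerivAt h (h' x) x)
    {u w c : ℝ} (hc : ∀ x ∈ Icc u w, c ≤ h' x) {x y : ℝ}
    (hx : x ∈ Icc u w) (hy : y ∈ Icc u w) (hxy : x ≤ y) :
    c * (y - x) ≤ h y - h x := by
  have hder : ∀ t, HasDerivAt (fun s => h s - c * s) (h' t - c) t := by
    intro t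
    have h2 : HasDerivAt (fun s => c * s) c t := by simpa using (hasDerivAt_id' t).const_mul c
    exact (hd t).sub h2
  have hcth : Continuous h :=
    Differentiable.continuous (fun t => (hd t).differentiableAt)
  have H : MonotoneOn (fun t => h t - c * t) (Icc u w) := by
    apply monotoneOn_of_deriv_nonneg (convex_Icc u w)
    · exact (hcth.sub (continuous_const.mul continuous_id)).continuousOn
    · intro t _
      exact (hder t).differentiableAt.differentiableWithinAt
    · intro t ht
      have ht' : t ∈ Icc u w := interior_subset ht
      rw [(hder t).deriv]
      linarith [hc t ht']
  have := H hx hy hxy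
  simp only at this
  linarith

private lemma step_pos {h h' : ℝ → ℝ} (hd : ∀ x, HasDerivAt h (h' x) x)
    {u ℓ c : ℝ} (hℓ : 0 < ℓ) (hc : 0 < c)
    (H : ∀ x ∈ Icc u (u + ℓ), c ≤ h' x) :
    ∃ v, u ≤ v ∧ v + ℓ / 4 ≤ u + ℓ ∧ ∀ x ∈ Icc v (v + ℓ / 4), c * ℓ / 4 ≤ |h x| := by
  have hm : u + ℓ / 2 ∈ Icc u (u + ℓ) := ⟨by linarith, by linarith⟩
  by_cases hsign : 0 ≤ h (u + ℓ / 2)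
  · refine ⟨u + 3 * ℓ / 4, by linarith, by linarith, ?_⟩
    intro x hx
    have hx1 : x ∈ Icc u (u + ℓ) := ⟨by linarith [hx.1], by linarith [hx.2]⟩
    have h1 := mono_aux hd H hm hx1 (by linarith [hx.1])
    have h2 : c * (ℓ / 4) ≤ c * (x - (u + ℓ / 2)) :=
      mul_le_mul_of_nonneg_left (by linarith [hx.1]) hc.le
    have : c * ℓ / 4 ≤ h x := by linarith
    exact le_abs.mpr (Or.inl this)
  · push_neg at hsign
    refine ⟨u, le_refl _, by linarith, ?_⟩
    intro x hx
    have hx1 : x ∈ Icc u (u + ℓ) := ⟨hx.1, by linarith [hx.2]⟩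
    have h1 := mono_aux hd H hx1 hm (by linarith [hx.2])
    have h2 : c * (ℓ / 4) ≤ c * ((u + ℓ / 2) - x) :=
      mul_le_mul_of_nonneg_left (by linarith [hx.2]) hc.le
    have : c * ℓ / 4 ≤ -h x := by linarith
    exact le_abs.mpr (Or.inr this)

private lemma stepB {h h' : ℝ → ℝ} (hd : ∀ x, HasDerivAt h (h' x) x) (hcont : Continuous h')
    {u ℓ c : ℝ} (hℓ : 0 < ℓ) (hc : 0 < c)
    (H : ∀ x ∈ Icc u (u + ℓ), c ≤ |h' x|) :
    ∃ v, u ≤ v ∧ v + ℓ / 4 ≤ u + ℓ ∧ ∀ x ∈ Icc v (v + ℓ / 4), c * ℓ / 4 ≤ |h x| := by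
  by_cases hall : ∀ x ∈ Icc u (u + ℓ), c ≤ h' x
  · exact step_pos hd hℓ hc hall
  · push_neg at hall
    obtain ⟨a, ha, haneg⟩ := hall
    have ha' : h' a ≤ -c := by
      rcases le_abs.mp (H a ha) with h1 | h1
      · linarith
      · linarith
    have hneg : ∀ x ∈ Icc u (u + ℓ), c ≤ -h' x := by
      by_contra hb
      push_neg at hb
      obtain ⟨b, hb, hbneg⟩ := hb
      have hb' : c ≤ h' b := by
        rcases le_abs.mp (H b hb) with h1 | h1
        · exact h1
        · linarith
      have hsub : uIcc a b ⊆ Icc u (u + ℓ) := uIcc_subset_Icc ha hb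
      have h0 : (0:ℝ) ∈ uIcc (h' a) (h' b) := by
        rw [mem_uIcc]
        left
        constructor <;> linarith
      obtain ⟨x, hxmem, hx0⟩ := intermediate_value_uIcc (hcont.continuousOn) h0
      have := H x (hsub hxmem)
      rw [hx0] at this
      simp at this
      linarith
    obtain ⟨v, hv1, hv2, hv3⟩ := step_pos (h := fun x => -h x) (h' := fun x => -h' x)
      (fun x => (hd x).neg) hℓ hc hneg
    exact ⟨v, hv1, hv2, fun x hx => by simpa using hv3 x hx⟩

private lemma key {f : ℝ → ℝ} (hf : ContDiff ℝ (⊤ : ℕ∞) f) :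
    ∀ (j : ℕ) (u ℓ c : ℝ), 0 < ℓ → 0 < c →
    (∀ x ∈ Icc u (u + ℓ), c ≤ |iteratedDeriv j f x|) →
    ∃ v, u ≤ v ∧ v + ℓ / 4 ^ j ≤ u + ℓ ∧
      ∀ x ∈ Icc v (v + ℓ / 4 ^ j), c * (ℓ / 4 ^ j) ^ j ≤ |f x| := by
  intro j
  induction j with
  | zero =>
    intro u ℓ c hℓ hc H
    refine ⟨u, le_refl _, by norm_num, ?_⟩
    intro x hx
    have := H x (by simpa using hx)
    simpa [iteratedDeriv_zero] using this
  | succ j ih =>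
    intro u ℓ c hℓ hc H
    have hdiff : Differentiable ℝ (iteratedDeriv j f) :=
      hf.differentiable_iteratedDeriv j (by
        exact_mod_cast WithTop.coe_lt_top _)
    have hd : ∀ x, HasDerivAt (iteratedDeriv j f) (iteratedDeriv (j + 1) f x) x := by
      intro x
      have := (hdiff x).hasDerivAt
      rwa [iteratedDeriv_succ]
    have hcont : Continuous (iteratedDeriv (j + 1) f) :=
      hf.continuous_iteratedDeriv (j + 1) (by exact_mod_cast le_top)
    obtain ⟨v₁, hv₁u, hv₁l, hv₁⟩ := stepB hd hcont hℓ hc H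
    obtain ⟨v, hv1, hv2, hv3⟩ := ih v₁ (ℓ / 4) (c * ℓ / 4) (by linarith) (by positivity)
      (fun x hx => hv₁ x hx)
    have heq : ℓ / 4 / 4 ^ j = ℓ / 4 ^ (j + 1) := by
      rw [pow_succ]
      ring
    rw [heq] at hv2 hv3
    refine ⟨v, le_trans hv₁u hv1, by linarith, ?_⟩
    intro x hx
    refine le_trans ?_ (hv3 x hx)
    have ht : ℓ / 4 ^ (j + 1) ≤ ℓ / 4 := by
      apply div_le_div_of_nonneg_left hℓ.le (by norm_num)
      calc (4:ℝ) = 4 ^ 1 := (pow_one 4).symm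
      _ ≤ 4 ^ (j + 1) := pow_le_pow_right₀ (by norm_num) (Nat.le_add_left 1 j)
    have hpow : (0:ℝ) ≤ (ℓ / 4 ^ (j + 1)) ^ j := by positivity
    calc c * (ℓ / 4 ^ (j + 1)) ^ (j + 1)
        = c * (ℓ / 4 ^ (j + 1)) ^ j * (ℓ / 4 ^ (j + 1)) := by ring
      _ ≤ c * (ℓ / 4 ^ (j + 1)) ^ j * (ℓ / 4) := by
          apply mul_le_mul_of_nonneg_left ht (by positivity)
      _ = c * ℓ / 4 * (ℓ / 4 ^ (j + 1)) ^ j := by ring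

/-- Uniform Tauberian theorem: for a family F of smooth functions,
uniformly bounded with all derivatives, vanishing at 0 and uniformly nondegenerate at 0,
and a Lévy density g with ∫ (z²∧1) g < ∞ and liminf_{z→0} |z|^{1+α} g(z) > 0 for some
α ∈ (0,2), there is α₁ > 0 such that
τ_f(β) = ∫ (exp(−β|f(z)|) − 1) g(z) dz satisfies
limsup_{β→∞} sup_{f∈F} τ_f(β)/β^{α₁} < 0; equivalently, there are c > 0 and B such that
for all β ≥ B and f ∈ F one has τ_f(β) ≤ −c β^{α₁}, i.e.
∫ (1 − exp(−β|f(z)|)) g(z) dz ≥ c β^{α₁} (a lower integral in [0,∞], which also covers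
the case τ_f(β) = −∞). -/
theorem stmt11 (α : ℝ) (hα : α ∈ Set.Ioo (0:ℝ) 2)
    (F : Set (ℝ → ℝ))
    (hFsm : ∀ f ∈ F, ContDiff ℝ (⊤ : ℕ∞) f)
    (hF0 : ∀ f ∈ F, f 0 = 0)
    (hFbdd : ∀ k : ℕ, ∃ M : ℝ, ∀ f ∈ F, ∀ z : ℝ, |iteratedDeriv k f z| ≤ M)
    (K : ℕ) (c₀ : ℝ) (hc₀ : 0 < c₀)
    (hFnd : ∀ f ∈ F, ∃ k : ℕ, 1 ≤ k ∧ k ≤ K ∧ c₀ ≤ |iteratedDeriv k f 0|)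
    (g : ℝ → ℝ) (hg0 : ∀ z, 0 ≤ g z)
    (hgint : Integrable fun z : ℝ => min (z ^ 2) 1 * g z)
    (hliminf : ∃ δ > (0:ℝ), ∃ cg > (0:ℝ), ∀ z : ℝ, z ≠ 0 → |z| < δ → cg ≤ |z| ^ (1 + α) * g z) :
    ∃ α₁ > (0:ℝ), ∃ c > (0:ℝ), ∃ B : ℝ, ∀ β : ℝ, B ≤ β → ∀ f ∈ F,
      ENNReal.ofReal (c * β ^ α₁) ≤
        ∫⁻ z : ℝ, ENNReal.ofReal ((1 - Real.exp (-(β * |f z|))) * g z) := by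
  rcases Set.eq_empty_or_nonempty F with hFe | ⟨f₀, hf₀⟩
  · exact ⟨1, one_pos, 1, one_pos, 0, fun β _ f hf => by simp [hFe] at hf⟩
  obtain ⟨k₀, hk₀1, hk₀K, _⟩ := hFnd f₀ hf₀
  have hK1 : 1 ≤ K := hk₀1.trans hk₀K
  have hKR : (0:ℝ) < K := by exact_mod_cast hK1
  obtain ⟨δ, hδ, cg, hcg, hg⟩ := hliminf
  choose Mf hMf using hFbdd
  set M : ℝ := 1 + ∑ i ∈ Finset.range (K + 2), |Mf i| with hM_def
  clear_value M
  have hM1 : 1 ≤ M := by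
    have : (0:ℝ) ≤ ∑ i ∈ Finset.range (K + 2), |Mf i| :=
      Finset.sum_nonneg (fun i _ => abs_nonneg _)
    simp only [hM_def]; linarith
  have hM0 : 0 < M := by linarith
  have hMle : ∀ k : ℕ, k ≤ K + 1 → ∀ f ∈ F, ∀ z : ℝ, |iteratedDeriv k f z| ≤ M := by
    intro k hk f hf z
    refine (hMf k f hf z).trans ?_
    have h1 : Mf k ≤ |Mf k| := le_abs_self _
    have h2 : |Mf k| ≤ ∑ i ∈ Finset.range (K + 2), |Mf i| :=
      Finset.single_le_sum (fun i _ => abs_nonneg (Mf i)) (by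
        exact Finset.mem_range.mpr (by omega))
    simp only [hM_def]; linarith
  set ρ : ℝ := min (c₀ / (2 * M)) (δ / 2) with hρ_def
  clear_value ρ
  have hρ : 0 < ρ := by rw [hρ_def]; exact lt_min (by positivity) (by linarith)
  set c₃ : ℝ := c₀ / 2 / 4 ^ (K * K) with hc₃_def
  clear_value c₃
  have hc₃ : 0 < c₃ := by rw [hc₃_def]; positivity
  set C₀ : ℝ := 1 - Real.exp (-c₃) with hC₀_def
  clear_value C₀
  have hC₀ : 0 < C₀ := by
    have : Real.exp (-c₃) < 1 := Real.exp_lt_one_iff.mpr (by linarith)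
    rw [hC₀_def]; linarith
  have hα0 : 0 < α := hα.1
  refine ⟨α / K, by positivity, C₀ * cg / 4 ^ K, by positivity, max 1 ((1 / ρ) ^ K), ?_⟩
  intro β hβ f hfF
  have hβ1 : 1 ≤ β := le_trans (le_max_left _ _) hβ
  have hβ0 : 0 < β := by linarith
  set ℓ : ℝ := β ^ (-(1:ℝ) / K) with hℓ_def
  clear_value ℓ
  have hℓ0 : 0 < ℓ := by rw [hℓ_def]; exact Real.rpow_pos_of_pos hβ0 _
  -- ℓ ≤ ρ
  have hℓρ : ℓ ≤ ρ := by
    have h1 : ((1 / ρ) ^ K : ℝ) ≤ β := le_trans (le_max_right _ _) hβ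
    have h2 : (1 / ρ) ≤ β ^ ((1:ℝ) / K) := by
      have h3 := Real.rpow_le_rpow (by positivity) h1 (by positivity : (0:ℝ) ≤ 1 / K)
      rwa [← Real.rpow_natCast (1 / ρ) K, ← Real.rpow_mul (by positivity),
        mul_one_div_cancel (ne_of_gt hKR), Real.rpow_one] at h3
    have h4 : 0 < β ^ ((1:ℝ) / K) := Real.rpow_pos_of_pos hβ0 _
    have h5 : ℓ = (β ^ ((1:ℝ) / K))⁻¹ := by
      rw [hℓ_def, ← Real.rpow_neg hβ0.le]
      congr 1
      ring
    rw [h5]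
    rw [inv_le_comm₀ h4 hρ]
    calc ρ⁻¹ = 1 / ρ := (one_div ρ).symm
      _ ≤ β ^ ((1:ℝ) / K) := h2
  obtain ⟨k, hk1, hkK, hknd⟩ := hFnd f hfF
  -- the k-th derivative is at least c₀/2 on [0, ℓ]
  have hder : ∀ x ∈ Icc (0:ℝ) (0 + ℓ), c₀ / 2 ≤ |iteratedDeriv k f x| := by
    intro x hx
    rw [zero_add] at hx
    have hdk : ∀ t ∈ Icc (0:ℝ) ℓ,
        HasDerivWithinAt (iteratedDeriv k f) (iteratedDeriv (k + 1) f t) (Icc (0:ℝ) ℓ) t := by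
      intro t _
      have hdiff : Differentiable ℝ (iteratedDeriv k f) :=
        (hFsm f hfF).differentiable_iteratedDeriv k (by exact_mod_cast WithTop.coe_lt_top _)
      have := (hdiff t).hasDerivAt
      rw [iteratedDeriv_succ]
      exact this.hasDerivWithinAt
    have hbd : ∀ t ∈ Icc (0:ℝ) ℓ, ‖iteratedDeriv (k + 1) f t‖ ≤ M := by
      intro t _
      rw [Real.norm_eq_abs]
      exact hMle (k + 1) (by omega) f hfF t
    have hmvt := (convex_Icc (0:ℝ) ℓ).norm_image_sub_le_of_norm_hasDerivWithin_le hdk hbd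
      (left_mem_Icc.mpr hℓ0.le) hx
    rw [Real.norm_eq_abs, Real.norm_eq_abs] at hmvt
    have hx0 : |x - 0| = x := by rw [sub_zero, abs_of_nonneg hx.1]
    rw [hx0] at hmvt
    -- M * x ≤ c₀ / 2
    have hxs : M * x ≤ c₀ / 2 := by
      have hxρ : x ≤ ρ := le_trans hx.2 hℓρ
      have : x ≤ c₀ / (2 * M) := le_trans hxρ (by rw [hρ_def]; exact min_le_left _ _)
      have := mul_le_mul_of_nonneg_left this hM0.le
      calc M * x ≤ M * (c₀ / (2 * M)) := this
        _ = c₀ / 2 := by field_simp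
    have habs : |iteratedDeriv k f 0| - |iteratedDeriv k f x| ≤ M * x := by
      calc |iteratedDeriv k f 0| - |iteratedDeriv k f x| ≤ |iteratedDeriv k f x - iteratedDeriv k f 0| := by
            rw [abs_sub_comm]; exact abs_sub_abs_le_abs_sub _ _
        _ ≤ M * x := hmvt
    linarith
  -- apply the key lemma on [0, ℓ]
  obtain ⟨v, hv0, hvl, hvf⟩ := key (hFsm f hfF) k 0 ℓ (c₀ / 2) hℓ0 (by positivity) hder
  rw [zero_add] at hvl
  have h1α : (0:ℝ) ≤ 1 + α := by linarith
  have hℓa : 0 < ℓ ^ (1 + α) := Real.rpow_pos_of_pos hℓ0 _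
  have h4k : (0:ℝ) < 4 ^ k := by positivity
  -- β * ℓ ^ k ≥ 1
  have hβℓk : 1 ≤ β * ℓ ^ k := by
    have e1 : ℓ ^ k = β ^ (-(k:ℝ) / K) := by
      rw [hℓ_def, ← Real.rpow_natCast (β ^ (-(1:ℝ) / K)) k, ← Real.rpow_mul hβ0.le]
      congr 1
      ring
    have e2 : β * β ^ (-(k:ℝ) / K) = β ^ (1 + -(k:ℝ) / K) := by
      rw [Real.rpow_add hβ0, Real.rpow_one]
    have e3 : (0:ℝ) ≤ 1 + -(k:ℝ) / K := by
      rw [neg_div]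
      have hkK' : (k:ℝ) ≤ K := by exact_mod_cast hkK
      have : (k:ℝ) / K ≤ 1 := (div_le_one hKR).mpr hkK'
      linarith
    rw [e1, e2]
    calc (1:ℝ) = β ^ (0:ℝ) := (Real.rpow_zero β).symm
      _ ≤ β ^ (1 + -(k:ℝ) / K) := Real.rpow_le_rpow_of_exponent_le hβ1 e3
  -- pointwise bound on the interval
  have hpoint : ∀ z ∈ Ioc v (v + ℓ / 4 ^ k),
      C₀ * (cg / ℓ ^ (1 + α)) ≤ (1 - Real.exp (-(β * |f z|))) * g z := by
    intro z hz
    have hz0 : 0 < z := lt_of_le_of_lt hv0 hz.1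
    have hzℓ : z ≤ ℓ := le_trans hz.2 hvl
    have hzδ : |z| < δ := by
      rw [abs_of_pos hz0]
      have : ℓ ≤ δ / 2 := le_trans hℓρ (by rw [hρ_def]; exact min_le_right _ _)
      linarith
    -- exp factor
    have hfz : c₀ / 2 * (ℓ / 4 ^ k) ^ k ≤ |f z| := hvf z ⟨hz.1.le, hz.2⟩
    have hc₃fz : c₃ ≤ β * |f z| := by
      have h41 : (4:ℝ) ^ (k * k) ≤ 4 ^ (K * K) :=
        pow_le_pow_right₀ (by norm_num) (Nat.mul_le_mul hkK hkK)
      have hA : c₃ ≤ β * (c₀ / 2 * (ℓ / 4 ^ k) ^ k) := by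
        rw [hc₃_def, div_pow, ← pow_mul]
        have h4kk : (0:ℝ) < 4 ^ (k * k) := by positivity
        have hstep1 : c₀ / 2 / 4 ^ (K * K) ≤ c₀ / 2 / 4 ^ (k * k) :=
          div_le_div_of_nonneg_left (by positivity) h4kk h41
        have hstep2 : c₀ / 2 / 4 ^ (k * k) ≤ β * (c₀ / 2 * (ℓ ^ k / 4 ^ (k * k))) := by
          have := mul_le_mul_of_nonneg_right hβℓk
            (le_of_lt (by positivity : (0:ℝ) < c₀ / 2 / 4 ^ (k * k)))
          calc c₀ / 2 / 4 ^ (k * k) = 1 * (c₀ / 2 / 4 ^ (k * k)) := (one_mul _).symm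
            _ ≤ β * ℓ ^ k * (c₀ / 2 / 4 ^ (k * k)) := this
            _ = β * (c₀ / 2 * (ℓ ^ k / 4 ^ (k * k))) := by ring
        linarith
      have hB : β * (c₀ / 2 * (ℓ / 4 ^ k) ^ k) ≤ β * |f z| :=
        mul_le_mul_of_nonneg_left hfz hβ0.le
      linarith
    have hexp : C₀ ≤ 1 - Real.exp (-(β * |f z|)) := by
      have := Real.exp_le_exp.mpr (by linarith : -(β * |f z|) ≤ -c₃)
      rw [hC₀_def]
      linarith
    -- g factor
    have hgz := hg z hz0.ne' hzδ
    have hzpow : 0 < |z| ^ (1 + α) := Real.rpow_pos_of_pos (abs_pos.mpr hz0.ne') _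
    have hzℓpow : |z| ^ (1 + α) ≤ ℓ ^ (1 + α) := by
      apply Real.rpow_le_rpow (abs_nonneg z) _ h1α
      rw [abs_of_pos hz0]
      exact hzℓ
    have hgz2 : cg / ℓ ^ (1 + α) ≤ g z := by
      calc cg / ℓ ^ (1 + α) ≤ cg / |z| ^ (1 + α) :=
            div_le_div_of_nonneg_left hcg.le hzpow hzℓpow
        _ ≤ g z := by
            rw [div_le_iff₀ hzpow]
            linarith [hgz]
    exact mul_le_mul hexp hgz2 (by positivity) (le_trans hC₀.le hexp)
  -- assemble the lintegral bound
  have hreal : C₀ * cg / 4 ^ K * β ^ (α / K) ≤ C₀ * (cg / ℓ ^ (1 + α)) * (ℓ / 4 ^ k) := by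
    have hr : ℓ / ℓ ^ (1 + α) = β ^ (α / K) := by
      rw [hℓ_def, ← Real.rpow_mul hβ0.le, ← Real.rpow_sub hβ0]
      congr 1
      ring
    have he : C₀ * (cg / ℓ ^ (1 + α)) * (ℓ / 4 ^ k) = C₀ * cg / 4 ^ k * (ℓ / ℓ ^ (1 + α)) := by
      ring
    rw [he, hr]
    apply mul_le_mul_of_nonneg_right _ (Real.rpow_nonneg hβ0.le _)
    apply div_le_div_of_nonneg_left (by positivity) h4k
    exact pow_le_pow_right₀ (by norm_num) hkK
  have hLpos : 0 < ℓ / 4 ^ k := by positivity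
  calc ENNReal.ofReal (C₀ * cg / 4 ^ K * β ^ (α / K))
      ≤ ENNReal.ofReal (C₀ * (cg / ℓ ^ (1 + α)) * (ℓ / 4 ^ k)) :=
        ENNReal.ofReal_le_ofReal hreal
    _ = ENNReal.ofReal (C₀ * (cg / ℓ ^ (1 + α))) * volume (Ioc v (v + ℓ / 4 ^ k)) := by
        rw [Real.volume_Ioc, add_sub_cancel_left, ← ENNReal.ofReal_mul (by positivity)]
    _ = ∫⁻ z : ℝ, (Ioc v (v + ℓ / 4 ^ k)).indicator
          (fun _ => ENNReal.ofReal (C₀ * (cg / ℓ ^ (1 + α)))) z := by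
        rw [lintegral_indicator_const measurableSet_Ioc]
    _ ≤ ∫⁻ z : ℝ, ENNReal.ofReal ((1 - Real.exp (-(β * |f z|))) * g z) := by
        apply lintegral_mono
        intro z
        by_cases hz : z ∈ Ioc v (v + ℓ / 4 ^ k)
        · rw [Set.indicator_of_mem hz]
          exact ENNReal.ofReal_le_ofReal (hpoint z hz)
        · rw [Set.indicator_of_notMem hz]
          exact zero_le
end
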